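/- arXiv:2604.09261 — 2 statements merged into one kernel-verified Lean document; each statement's English description precedes it below -/
import Mathlib

section
/- The function G(b) = p·Q·F′(b) / F(b)², where F′(b) = log₂((2·N₀·b + 2·h·p)/(2·N₀·b + h·p)) − (2·N₀·b·h·p)/((ln 2)·(2·N₀·b + 2·h·p)·(2·N₀·b + h·p)), is strictly decreasing on the positive reals: for all 0 < b₁ < b₂, G(b₁) > G(b₂). -/
/-!
With `a = 2 N₀`, `c = h p` and `t = c / (a b + c) ∈ (0, 1)`, the bracket `F′(b) · ln 2` equals
`φ(t) = ln (1 + t) - t (1 - t) / (1 + t)`. Since `φ(0) = 0` and `φ′(t) = t (t + 3) / (1 + t)² > 0`,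
and `t` decreases in `b`, the function `F′` is positive and strictly decreasing. As `F′` is the
derivative of `F > 0`, `F` is strictly increasing, so `F′ / F²` is strictly decreasing.
-/

open Real Set

/-- `F` of the paper is `rate (2 * N₀) (h * p)`, and `F′` is `rateDeriv (2 * N₀) (h * p)`. -/
noncomputable def rate (a c b : ℝ) : ℝ := b * logb 2 (1 + c / (a * b + c))

noncomputable def rateDeriv (a c b : ℝ) : ℝ :=
  logb 2 ((a * b + 2 * c) / (a * b + c)) - a * b * c / (log 2 * (a * b + 2 * c) * (a * b + c))

noncomputable def rateDerivProfile (t : ℝ) : ℝ := log (1 + t) - t * (1 - t) / (1 + t)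

lemma hasDerivAt_rateDerivProfile {t : ℝ} (ht : -1 < t) :
    HasDerivAt rateDerivProfile (t * (t + 3) / (1 + t) ^ 2) t := by
  have h1t : 1 + t ≠ 0 := by linarith
  have hlin : HasDerivAt (fun s => 1 + s) 1 t := (hasDerivAt_id t).const_add 1
  have hprod : HasDerivAt (fun s => s * (1 - s)) (1 * (1 - t) + t * (-1)) t :=
    (hasDerivAt_id t).mul ((hasDerivAt_id t).const_sub 1)
  refine ((hlin.log h1t).sub (hprod.div hlin h1t)).congr_deriv ?_
  field_simp
  ring

lemma strictMonoOn_rateDerivProfile : StrictMonoOn rateDerivProfile (Ici 0) := by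
  apply strictMonoOn_of_deriv_pos (convex_Ici 0)
  · intro t (ht : 0 ≤ t)
    exact (hasDerivAt_rateDerivProfile (by linarith)).continuousAt.continuousWithinAt
  · rw [interior_Ici]
    intro t (ht : 0 < t)
    rw [(hasDerivAt_rateDerivProfile (by linarith)).deriv]
    positivity

lemma rateDerivProfile_pos {t : ℝ} (ht : 0 < t) : 0 < rateDerivProfile t := by
  simpa [rateDerivProfile] using
    strictMonoOn_rateDerivProfile self_mem_Ici ht.le ht

section

variable {a c : ℝ}

lemma rateDeriv_eq (ha : 0 < a) (hc : 0 < c) {b : ℝ} (hb : 0 < b) :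
    rateDeriv a c b = rateDerivProfile (c / (a * b + c)) / log 2 := by
  have hsum : 1 + c / (a * b + c) = (a * b + 2 * c) / (a * b + c) := by
    field_simp; ring
  rw [rateDeriv, rateDerivProfile, hsum, logb]
  field_simp
  ring

lemma rateDeriv_pos (ha : 0 < a) (hc : 0 < c) {b : ℝ} (hb : 0 < b) : 0 < rateDeriv a c b := by
  rw [rateDeriv_eq ha hc hb]
  exact div_pos (rateDerivProfile_pos (by positivity)) (log_pos one_lt_two)

lemma strictAntiOn_rateDeriv (ha : 0 < a) (hc : 0 < c) :
    StrictAntiOn (rateDeriv a c) (Ioi 0) := by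
  intro b₁ (hb₁ : 0 < b₁) b₂ (hb₂ : 0 < b₂) hb
  rw [rateDeriv_eq ha hc hb₁, rateDeriv_eq ha hc hb₂]
  have ht : c / (a * b₂ + c) < c / (a * b₁ + c) :=
    div_lt_div_of_pos_left hc (by positivity) (by gcongr)
  refine div_lt_div_of_pos_right ?_ (log_pos one_lt_two)
  exact strictMonoOn_rateDerivProfile (mem_Ici.mpr (by positivity))
    (mem_Ici.mpr (by positivity)) ht

lemma hasDerivAt_rate (ha : 0 < a) (hc : 0 < c) {b : ℝ} (hb : 0 < b) :
    HasDerivAt (rate a c) (rateDeriv a c b) b := by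
  have h1 : 0 < a * b + c := by positivity
  have hlin : HasDerivAt (fun x => a * x + c) a b := by
    simpa using ((hasDerivAt_id b).const_mul a).add_const c
  have hsum : HasDerivAt (fun x => 1 + c / (a * x + c))
      ((0 * (a * b + c) - c * a) / (a * b + c) ^ 2) b :=
    ((hasDerivAt_const b c).div hlin h1.ne').const_add 1
  have hpos : 0 < 1 + c / (a * b + c) := by positivity
  refine ((hasDerivAt_id' b).mul ((hsum.log hpos.ne').div_const (log 2))).congr_deriv ?_
  have hq : 1 + c / (a * b + c) = (a * b + 2 * c) / (a * b + c) := by field_simp; ring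
  rw [rateDeriv, hq, logb]
  field_simp
  ring

lemma rate_pos (ha : 0 < a) (hc : 0 < c) {b : ℝ} (hb : 0 < b) : 0 < rate a c b :=
  mul_pos hb (logb_pos one_lt_two (lt_add_of_pos_right 1 (by positivity)))

lemma strictMonoOn_rate (ha : 0 < a) (hc : 0 < c) : StrictMonoOn (rate a c) (Ioi 0) := by
  apply strictMonoOn_of_deriv_pos (convex_Ioi 0)
  · exact fun b hb => (hasDerivAt_rate ha hc hb).continuousAt.continuousWithinAt
  · intro b hb
    rw [interior_Ioi] at hb
    rw [(hasDerivAt_rate ha hc hb).deriv]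
    exact rateDeriv_pos ha hc hb

end

/-- The function `G(b) = p·Q·F′(b) / F(b)²`, where `F′` is the derivative
expression of `F`, is strictly decreasing on the positive reals: for all `0 < b₁ < b₂`,
`G(b₁) > G(b₂)`. -/
theorem stmt_13 (h p N₀ Q : ℝ) (hh : 0 < h) (hp : 0 < p) (hN : 0 < N₀) (hQ : 0 < Q)
    (F F' G : ℝ → ℝ)
    (hF : ∀ b : ℝ, F b = b * Real.logb 2 (1 + h * p / (2 * N₀ * b + h * p)))
    (hF' : ∀ b : ℝ, F' b =
      Real.logb 2 ((2 * N₀ * b + 2 * h * p) / (2 * N₀ * b + h * p)) -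
        (2 * N₀ * b * h * p) /
          (Real.log 2 * (2 * N₀ * b + 2 * h * p) * (2 * N₀ * b + h * p)))
    (hG : ∀ b : ℝ, G b = p * Q * F' b / (F b) ^ 2)
    (b₁ b₂ : ℝ) (hb₁ : 0 < b₁) (hb : b₁ < b₂) :
    G b₁ > G b₂ := by
  have ha : 0 < 2 * N₀ := by positivity
  have hc : 0 < h * p := mul_pos hh hp
  have hF_eq (b : ℝ) : F b = rate (2 * N₀) (h * p) b := hF b
  have hF'_eq (b : ℝ) : F' b = rateDeriv (2 * N₀) (h * p) b := by
    rw [hF' b, rateDeriv]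
    ring_nf
  have hb₂ : 0 < b₂ := hb₁.trans hb
  have hF_lt := strictMonoOn_rate ha hc hb₁ hb₂ hb
  have hF'_lt := strictAntiOn_rateDeriv ha hc hb₁ hb₂ hb
  have := rate_pos ha hc hb₁
  have := rate_pos ha hc hb₂
  have := rateDeriv_pos ha hc hb₁
  simp only [gt_iff_lt, hG, hF_eq, hF'_eq]
  calc p * Q * rateDeriv (2 * N₀) (h * p) b₂ / rate (2 * N₀) (h * p) b₂ ^ 2
      < p * Q * rateDeriv (2 * N₀) (h * p) b₁ / rate (2 * N₀) (h * p) b₂ ^ 2 := by gcongr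
    _ < p * Q * rateDeriv (2 * N₀) (h * p) b₁ / rate (2 * N₀) (h * p) b₁ ^ 2 := by gcongr
end

section
/- Let c be a real number with 0 < c < h·p/(2·N₀·ln 2), and let b₀ > 0 be the unique positive solution of F(b₀) = c. Then for every b > 0, the inequality F(b) ≥ c holds if and only if b ≥ b₀; that is, the delay constraint is equivalent to a bandwidth lower bound. -/
/-!
`F b = b · log₂(1 + a / (k b + a))` with `a = h p`, `k = 2 N₀` is strictly increasing on `[0, ∞)`,
so `F b ≥ F b₀ ↔ b ≥ b₀`. With `s = k x + a`, the derivative of `x · log(1 + a / s)` is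
`log(1 + a / s) - k a x / (s (s + a))`, and `log(1 + a / s) ≥ a / (s + a)` (from `log t ≥ 1 - 1 / t`)
exceeds the subtracted term by `a² / (s (s + a)) > 0`.
-/

open Real Set

section

variable {a k : ℝ}

theorem hasDerivAt_mul_log_one_add_div {x : ℝ} (hs : 0 < k * x + a) (hsa : 0 < k * x + 2 * a) :
    HasDerivAt (fun x => x * log (1 + a / (k * x + a)))
      (log (1 + a / (k * x + a)) - k * a * x / ((k * x + a) * (k * x + 2 * a))) x := by
  have hlin : HasDerivAt (fun x => k * x + a) k x := by
    simpa using ((hasDerivAt_id x).const_mul k).add_const a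
  have hquot := ((hasDerivAt_const x a).div hlin hs.ne').const_add 1
  have hpos : 1 + a / (k * x + a) ≠ 0 := by
    rw [one_add_div hs.ne']; exact div_ne_zero (by linarith) hs.ne'
  refine ((hasDerivAt_id x).mul (hquot.log hpos)).congr_deriv ?_
  simp only [Pi.div_apply, id_eq]
  field_simp
  ring

theorem div_lt_log_one_add_div (ha : 0 < a) {x : ℝ} (hs : 0 < k * x + a) :
    k * a * x / ((k * x + a) * (k * x + 2 * a)) < log (1 + a / (k * x + a)) := by
  have hsa : 0 < k * x + 2 * a := by linarith
  have hlog : a / (k * x + 2 * a) ≤ log (1 + a / (k * x + a)) := by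
    convert one_sub_inv_le_log_of_pos (by positivity : 0 < 1 + a / (k * x + a)) using 1
    rw [one_add_div hs.ne', inv_div, one_sub_div (by linarith)]
    ring
  have hgap : a / (k * x + 2 * a) - k * a * x / ((k * x + a) * (k * x + 2 * a))
      = a ^ 2 / ((k * x + a) * (k * x + 2 * a)) := by
    field_simp; ring
  have : 0 < a ^ 2 / ((k * x + a) * (k * x + 2 * a)) := by positivity
  linarith

theorem strictMonoOn_mul_log_one_add_div (ha : 0 < a) (hk : 0 ≤ k) :
    StrictMonoOn (fun x => x * log (1 + a / (k * x + a))) (Ici 0) := by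
  have hs : ∀ x ∈ Ici (0 : ℝ), 0 < k * x + a := fun x hx => by
    have := mul_nonneg hk (mem_Ici.mp hx); linarith
  have hderiv : ∀ x ∈ Ici (0 : ℝ), HasDerivAt (fun x => x * log (1 + a / (k * x + a)))
      (log (1 + a / (k * x + a)) - k * a * x / ((k * x + a) * (k * x + 2 * a))) x :=
    fun x hx => hasDerivAt_mul_log_one_add_div (hs x hx) (by linarith [hs x hx])
  refine strictMonoOn_of_deriv_pos (convex_Ici 0)
    (fun x hx => (hderiv x hx).continuousAt.continuousWithinAt) fun x hx => ?_
  rw [interior_Ici] at hx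
  rw [(hderiv x (Ioi_subset_Ici_self hx)).deriv]
  exact sub_pos.mpr <| div_lt_log_one_add_div ha (hs x (Ioi_subset_Ici_self hx))

theorem strictMonoOn_mul_logb_one_add_div {β : ℝ} (hβ : 1 < β) (ha : 0 < a) (hk : 0 ≤ k) :
    StrictMonoOn (fun x => x * logb β (1 + a / (k * x + a))) (Ici 0) := by
  intro x hx y hy hxy
  simp only [logb, ← mul_div_assoc]
  exact div_lt_div_of_pos_right (strictMonoOn_mul_log_one_add_div ha hk hx hy hxy) (log_pos hβ)

end

theorem stmt_15_general (h p N₀ : ℝ) (hh : 0 < h) (hp : 0 < p) (hN : 0 < N₀)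
    (F : ℝ → ℝ)
    (hF : ∀ b : ℝ, F b = b * Real.logb 2 (1 + h * p / (2 * N₀ * b + h * p)))
    (c : ℝ)
    (b₀ : ℝ) (hb₀ : 0 < b₀) (hFb₀ : F b₀ = c)
    (b : ℝ) (hb : 0 < b) :
    F b ≥ c ↔ b ≥ b₀ := by
  have hmono : StrictMonoOn F (Ici 0) := by
    rw [funext hF]
    exact strictMonoOn_mul_logb_one_add_div one_lt_two (by positivity) (by positivity)
  rw [← hFb₀]
  exact hmono.le_iff_le hb₀.le hb.le

/-- Let `0 < c < h·p/(2·N₀·ln 2)` and let `b₀ > 0` be the unique positive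
solution of `F(b₀) = c`. Then for every `b > 0`, `F(b) ≥ c ↔ b ≥ b₀`: the delay
constraint is equivalent to a bandwidth lower bound. -/
theorem stmt_15 (h p N₀ : ℝ) (hh : 0 < h) (hp : 0 < p) (hN : 0 < N₀)
    (F : ℝ → ℝ)
    (hF : ∀ b : ℝ, F b = b * Real.logb 2 (1 + h * p / (2 * N₀ * b + h * p)))
    (c : ℝ) (hc0 : 0 < c) (hc1 : c < h * p / (2 * N₀ * Real.log 2))
    (b₀ : ℝ) (hb₀ : 0 < b₀) (hFb₀ : F b₀ = c)
    (b : ℝ) (hb : 0 < b) :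
    F b ≥ c ↔ b ≥ b₀ :=
  stmt_15_general h p N₀ hh hp hN F hF c b₀ hb₀ hFb₀ b hb
end
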